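/- arXiv:1702.01199 — 5 statements merged into one kernel-verified Lean document; each statement's English description precedes it below -/
import Mathlib

section
/- Let $A$ and $B$ be types and let $S \subseteq A \times B$ be a finite set. For $a \in A$ let $S_a = \{b \in B : (a,b) \in S\}$ denote the fiber of $S$ over $a$. Then the following are equivalent: (1) the fibers of $S$ are totally ordered by inclusion, i.e. for all $a, a' \in A$, $S_a \subseteq S_{a'}$ or $S_{a'} \subseteq S_a$; (2) $S$ satisfies the $(\star)$-property: for all $(a,b), (a',b') \in S$ with $a \neq a'$ and $b \neq b'$, at least one of $(a,b')$ and $(a',b)$ belongs to $S$. -/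
/-- Combinatorial characterization of ACM sets of points in `ℙ¹ × ℙ¹`:
the fibers are totally ordered by inclusion iff the `(⋆)`-property holds. -/
theorem star_iff_inclusion {A B : Type*} (S : Set (A × B)) (hS : S.Finite) :
    (∀ a a' : A, {b : B | (a, b) ∈ S} ⊆ {b : B | (a', b) ∈ S} ∨
        {b : B | (a', b) ∈ S} ⊆ {b : B | (a, b) ∈ S}) ↔
    (∀ a b a' b', (a, b) ∈ S → (a', b') ∈ S → a ≠ a' → b ≠ b' →
        (a, b') ∈ S ∨ (a', b) ∈ S) := by
  constructor
  · intro h a b a' b' hab ha'b' _ _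
    rcases h a a' with hsub | hsub
    · exact Or.inr (hsub hab)
    · exact Or.inl (hsub ha'b')
  · intro h a a'
    by_contra hc
    push_neg at hc
    obtain ⟨h1, h2⟩ := hc
    rw [Set.not_subset] at h1 h2
    obtain ⟨b, hb, hb'⟩ := h1
    obtain ⟨b', hb'2, hb'3⟩ := h2
    have hne : a ≠ a' := by rintro rfl; exact hb' hb
    have hbne : b ≠ b' := by rintro rfl; exact hb' hb'2
    rcases h a b a' b' hb hb'2 hne hbne with h1 | h1
    · exact hb'3 h1
    · exact hb' h1
end

section
/- Let $n \geq 1$ and let $\alpha_1, \dots, \alpha_n$ be types. For $v, w \in \prod_i \alpha_i$ define the Hamming distance $d(v,w) = |\{i : v_i \neq w_i\}|$. Let $S \subseteq \prod_i \alpha_i$ and $2 \leq s \leq n$, and suppose $S$ has the following property: for all $v, w \in S$ with $2 \leq d(v,w) \leq s$, there exists $u \in S$ with $u \neq v$, $u \neq w$, and $u_i \in \{v_i, w_i\}$ for all $i$. Then for all $v, w \in S$ with $d(v,w) = r \leq s$, there exist $u_0, u_1, \dots, u_r \in S$ such that $u_0 = v$, $u_r = w$, and $d(u_{i-1}, u_i)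 = 1$ for $i = 1, \dots, r$. -/
open RingTheory

private lemma ham_split_aux {n : ℕ} {α : Fin n → Type*} [∀ i, DecidableEq (α i)]
    {v w u : ∀ i, α i} (h : ∀ i, u i = v i ∨ u i = w i) :
    hammingDist v u + hammingDist u w = hammingDist v w := by
  classical
  simp only [hammingDist]
  rw [← Finset.card_union_of_disjoint]
  · congr 1
    ext i
    simp only [Finset.mem_union, Finset.mem_filter, Finset.mem_univ, true_and]
    rcases h i with h1 | h1 <;> rw [h1] <;>
      constructor <;> intro h2 <;> simp at h2 ⊢ <;> tauto
  · rw [Finset.disjoint_left]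
    intro i hi hj
    simp only [Finset.mem_filter, Finset.mem_univ, true_and] at hi hj
    rcases h i with h1 | h1
    · exact hi h1.symm
    · exact hj h1

private lemma star_path_aux {n : ℕ} {α : Fin n → Type*}
    [∀ i, DecidableEq (α i)] (S : Set (∀ i, α i)) {s : ℕ}
    (hstar : ∀ v ∈ S, ∀ w ∈ S, 2 ≤ hammingDist v w → hammingDist v w ≤ s →
      ∃ u ∈ S, u ≠ v ∧ u ≠ w ∧ ∀ i, u i = v i ∨ u i = w i) :
    ∀ r : ℕ, r ≤ s → ∀ v ∈ S, ∀ w ∈ S, hammingDist v w = r →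
    ∃ u : ℕ → ∀ i, α i, u 0 = v ∧ u r = w ∧ (∀ i ≤ r, u i ∈ S) ∧
      ∀ i, 1 ≤ i → i ≤ r → hammingDist (u (i - 1)) (u i) = 1 := by
  intro r
  induction r using Nat.strong_induction_on with
  | _ r ih =>
  intro hrs v hv w hw hr
  match r, hr, hrs, ih with
  | 0, hr, hrs, ih =>
    have hvw : v = w := hammingDist_eq_zero.mp hr
    exact ⟨fun _ => v, rfl, hvw ▸ rfl, fun i _ => hv, fun i h1 h0 => by omega⟩
  | 1, hr, hrs, ih =>
    refine ⟨fun i => if i = 0 then v else w, by simp, by simp, ?_, ?_⟩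
    · intro i hi
      interval_cases i <;> simp [hv, hw]
    · intro i h1 h2
      have : i = 1 := by omega
      subst this
      simpa using hr
  | (r + 2), hr, hrs, ih =>
    obtain ⟨u, huS, huv, huw, hcoord⟩ := hstar v hv w hw (by omega) (by omega)
    have hsum : hammingDist v u + hammingDist u w = r + 2 := by
      rw [ham_split_aux hcoord, hr]
    set r1 := hammingDist v u with hr1
    set r2 := hammingDist u w with hr2
    have h1pos : 0 < r1 :=
      Nat.pos_of_ne_zero fun h => huv (hammingDist_eq_zero.mp h).symm
    have h2pos : 0 < r2 :=
      Nat.pos_of_ne_zero fun h => huw (hammingDist_eq_zero.mp h)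
    obtain ⟨p1, hp10, hp1e, hp1S, hp1step⟩ :=
      ih r1 (by omega) (by omega) v hv u huS rfl
    obtain ⟨p2, hp20, hp2e, hp2S, hp2step⟩ :=
      ih r2 (by omega) (by omega) u huS w hw rfl
    refine ⟨fun i => if i ≤ r1 then p1 i else p2 (i - r1), ?_, ?_, ?_, ?_⟩
    · simp [hp10]
    · have hgt : ¬ (r + 2 ≤ r1) := by omega
      have : r + 2 - r1 = r2 := by omega
      simp [hgt, this, hp2e]
    · intro i hi
      by_cases hc : i ≤ r1
      · simp only [if_pos hc]; exact hp1S i hc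
      · simp only [if_neg hc]; exact hp2S (i - r1) (by omega)
    · intro i hi1 hir
      by_cases hc : i ≤ r1
      · have hc' : i - 1 ≤ r1 := by omega
        simp only [if_pos hc, if_pos hc']
        exact hp1step i hi1 hc
      · push_neg at hc
        by_cases hb : i = r1 + 1
        · subst hb
          have hc1 : r1 + 1 - 1 ≤ r1 := by omega
          simp only [if_pos hc1, if_neg (by omega : ¬ r1 + 1 ≤ r1)]
          have : r1 + 1 - r1 = 1 := by omega
          rw [this, Nat.add_sub_cancel, hp1e, ← hp20]
          simpa using hp2step 1 le_rfl (by omega)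
        · have hc1 : ¬ i - 1 ≤ r1 := by omega
          simp only [if_neg hc1, if_neg (by omega : ¬ i ≤ r1)]
          have : i - 1 - r1 = i - r1 - 1 := by omega
          rw [this]
          exact hp2step (i - r1) (by omega) (by omega)

/-- The path lemma for sets with the `(⋆ₛ)`-property: any two points of `S` at
Hamming distance `r ≤ s` are joined by a path in `S` of unit Hamming steps. -/
theorem star_path_lemma {n : ℕ} (hn : 1 ≤ n) {α : Fin n → Type*}
    [∀ i, DecidableEq (α i)] (S : Set (∀ i, α i)) {s : ℕ} (hs2 : 2 ≤ s) (hsn : s ≤ n)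
    (hstar : ∀ v ∈ S, ∀ w ∈ S, 2 ≤ hammingDist v w → hammingDist v w ≤ s →
      ∃ u ∈ S, u ≠ v ∧ u ≠ w ∧ ∀ i, u i = v i ∨ u i = w i)
    {v w : ∀ i, α i} (hv : v ∈ S) (hw : w ∈ S) {r : ℕ}
    (hr : hammingDist v w = r) (hrs : r ≤ s) :
    ∃ u : ℕ → ∀ i, α i, u 0 = v ∧ u r = w ∧ (∀ i ≤ r, u i ∈ S) ∧
      ∀ i, 1 ≤ i → i ≤ r → hammingDist (u (i - 1)) (u i) = 1 := by
  exact star_path_aux S hstar r hrs v hv w hw hr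
end

section
/- Let $n \geq 1$, let $\alpha_1, \dots, \alpha_n$ be types, and let $d$ denote Hamming distance on $\prod_i \alpha_i$. Let $S \subseteq \prod_i \alpha_i$ have the property that for all $v, w \in S$ with $2 \leq d(v,w) \leq s$ (where $2 \leq s \leq n$) there exists $u \in S \setminus \{v,w\}$ with $u_i \in \{v_i, w_i\}$ for all $i$. Suppose $v, w \in S$ satisfy $d(v,w) \leq s$ and $v_1 \neq w_1$. Then there exist $a, b \in S$ with $a_1 \neq b_1$, $d(a,b) = 1$, and $a_i, b_i \in \{v_i, w_i\}$ for all $i$. -/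
lemma star_ham_split {n : ℕ} {α : Fin n → Type*} [∀ i, DecidableEq (α i)]
    {u v w : ∀ i, α i} (hu : ∀ i, u i = v i ∨ u i = w i) :
    hammingDist u v + hammingDist u w = hammingDist v w := by
  classical
  simp only [hammingDist]
  rw [← Finset.card_union_of_disjoint]
  · congr 1
    ext i
    simp only [Finset.mem_union, Finset.mem_filter, Finset.mem_univ, true_and]
    rcases hu i with h | h <;> rw [h] <;> constructor <;> intro hh
    · tauto
    · tauto
    · rcases hh with hh | hh
      · exact fun e => hh e.symm
      · exact absurd rfl hh
    · exact Or.inl fun e => hh e.symm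
  · rw [Finset.disjoint_left]
    intro i hi hj
    simp only [Finset.mem_filter, Finset.mem_univ, true_and] at hi hj
    rcases hu i with h | h
    · exact hi h
    · exact hj h

/-- Second combinatorial lemma on the `(⋆ₛ)`-property: if two points of `S`
differ in the first coordinate and have Hamming distance at most `s`, then some
pair of points of `S` in the box spanned by `v, w` differ exactly in the first
coordinate. -/
theorem star_first_coordinate_lemma {n : ℕ} (hn : 0 < n) {α : Fin n → Type*}
    [∀ i, DecidableEq (α i)] (S : Set (∀ i, α i)) {s : ℕ} (hs2 : 2 ≤ s) (hsn : s ≤ n)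
    (hstar : ∀ v ∈ S, ∀ w ∈ S, 2 ≤ hammingDist v w → hammingDist v w ≤ s →
      ∃ u ∈ S, u ≠ v ∧ u ≠ w ∧ ∀ i, u i = v i ∨ u i = w i)
    {v w : ∀ i, α i} (hv : v ∈ S) (hw : w ∈ S)
    (hd : hammingDist v w ≤ s) (h1 : v ⟨0, hn⟩ ≠ w ⟨0, hn⟩) :
    ∃ a ∈ S, ∃ b ∈ S, a ⟨0, hn⟩ ≠ b ⟨0, hn⟩ ∧ hammingDist a b = 1 ∧
      (∀ i, a i = v i ∨ a i = w i) ∧ (∀ i, b i = v i ∨ b i = w i) := by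
  classical
  suffices H : ∀ d : ℕ, ∀ v w : ∀ i, α i, v ∈ S → w ∈ S → hammingDist v w = d →
      hammingDist v w ≤ s → v ⟨0, hn⟩ ≠ w ⟨0, hn⟩ →
      ∃ a ∈ S, ∃ b ∈ S, a ⟨0, hn⟩ ≠ b ⟨0, hn⟩ ∧ hammingDist a b = 1 ∧
        (∀ i, a i = v i ∨ a i = w i) ∧ (∀ i, b i = v i ∨ b i = w i) by
    exact H _ v w hv hw rfl hd h1
  intro d
  induction d using Nat.strong_induction_on with
  | _ d ih =>
    intro v w hv hw hdeq hds h1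
    have hpos : 0 < hammingDist v w := hammingDist_pos.mpr (fun e => h1 (congrFun e _))
    rcases le_or_gt (hammingDist v w) 1 with hle | hlt
    · exact ⟨v, hv, w, hw, h1, le_antisymm hle hpos, fun i => Or.inl rfl, fun i => Or.inr rfl⟩
    · obtain ⟨u, hu, huv, huw, hbox⟩ := hstar v hv w hw hlt hds
      have hsplit := star_ham_split hbox
      have h1v : 1 ≤ hammingDist u v := hammingDist_pos.mpr huv
      have h1w : 1 ≤ hammingDist u w := hammingDist_pos.mpr huw
      rcases hbox ⟨0, hn⟩ with h0 | h0
      · -- u agrees with v at 0, so u ≠ w at 0; recurse on (u, w)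
        have hne : u ⟨0, hn⟩ ≠ w ⟨0, hn⟩ := h0 ▸ h1
        have hlt' : hammingDist u w < d := by omega
        obtain ⟨a, ha, b, hb, hab1, hab2, hboxa, hboxb⟩ :=
          ih _ hlt' u w hu hw rfl (by omega) hne
        refine ⟨a, ha, b, hb, hab1, hab2, fun i => ?_, fun i => ?_⟩
        · rcases hboxa i with h | h
          · rcases hbox i with h' | h' <;> rw [h, h'] <;> simp
          · exact Or.inr h
        · rcases hboxb i with h | h
          · rcases hbox i with h' | h' <;> rw [h, h'] <;> simp
          · exact Or.inr h
      · have hne : u ⟨0, hn⟩ ≠ v ⟨0, hn⟩ := h0 ▸ h1.symm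
        have hlt' : hammingDist u v < d := by omega
        obtain ⟨a, ha, b, hb, hab1, hab2, hboxa, hboxb⟩ :=
          ih _ hlt' u v hu hv rfl (by omega) hne
        refine ⟨a, ha, b, hb, hab1, hab2, fun i => ?_, fun i => ?_⟩
        · rcases hboxa i with h | h
          · rcases hbox i with h' | h' <;> rw [h, h'] <;> simp
          · exact Or.inl h
        · rcases hboxb i with h | h
          · rcases hbox i with h' | h' <;> rw [h, h'] <;> simp
          · exact Or.inl h
end

section
/- Let $R$ be a commutative Noetherian ring, let $I_1, I_2 \subseteq R$ be ideals, and let $F_1, F_2 \in R$ with $F_1 \in I_2$ and $F_2 \in I_1$. Then $\sqrt{F_1 I_1 + F_2 I_2} = \sqrt{I_1} \cap \sqrt{I_2} \cap \sqrt{(F_1, F_2)}$. Equivalently, a prime ideal $\mathfrak{p}$ contains $F_1 I_1 + F_2 I_2$ if and only if $\mathfrak{p} \supseteq I_1$, or $\mathfrak{p} \supseteq I_2$, or $\mathfrak{p} \supseteq (F_1, F_2)$. -/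
/-!
Every term of `F₁I₁ + F₂I₂` lies in `I₁ ∩ I₂ ∩ (F₁, F₂)` because `F₁ ∈ I₂` and `F₂ ∈ I₁`,
while conversely the product `I₁I₂(F₁, F₂) = F₁I₂·I₁ + F₂I₁·I₂` lies in `F₁I₁ + F₂I₂`.
The ideal is thus squeezed between a product and an intersection of the same three ideals,
which have the same radical.
-/

namespace Ideal

variable {R : Type*} [CommSemiring R]

theorem mul_mul_span_pair_le (I₁ I₂ : Ideal R) (F₁ F₂ : R) :
    I₁ * I₂ * span {F₁, F₂} ≤ span {F₁} * I₁ + span {F₂} * I₂ := by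
  rw [span_insert, mul_sup]
  apply sup_le
  · calc I₁ * I₂ * span {F₁} = span {F₁} * I₁ * I₂ := by ring
      _ ≤ span {F₁} * I₁ := mul_le_left
      _ ≤ _ := le_sup_left
  · calc I₁ * I₂ * span {F₂} = span {F₂} * I₂ * I₁ := by ring
      _ ≤ span {F₂} * I₂ := mul_le_left
      _ ≤ _ := le_sup_right

theorem span_singleton_mul_add_le_inf {I₁ I₂ : Ideal R} {F₁ F₂ : R}
    (h1 : F₁ ∈ I₂) (h2 : F₂ ∈ I₁) :
    span {F₁} * I₁ + span {F₂} * I₂ ≤ I₁ ⊓ I₂ ⊓ span {F₁, F₂} := by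
  have hF₁ : span {F₁} ≤ I₂ ⊓ span {F₁, F₂} :=
    span_le.mpr (by simpa using ⟨h1, subset_span (by simp)⟩)
  have hF₂ : span {F₂} ≤ I₁ ⊓ span {F₁, F₂} :=
    span_le.mpr (by simpa using ⟨h2, subset_span (by simp)⟩)
  refine sup_le (le_inf (le_inf mul_le_right ?_) ?_) (le_inf (le_inf ?_ mul_le_right) ?_)
  · exact mul_le_left.trans (hF₁.trans inf_le_left)
  · exact mul_le_left.trans (hF₁.trans inf_le_right)
  · exact mul_le_left.trans (hF₂.trans inf_le_left)
  · exact mul_le_left.trans (hF₂.trans inf_le_right)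

end Ideal

theorem liaison_addition_radical_general {R : Type*} [CommRing R]
    (I₁ I₂ : Ideal R) (F₁ F₂ : R) (h1 : F₁ ∈ I₂) (h2 : F₂ ∈ I₁) :
    (Ideal.span {F₁} * I₁ + Ideal.span {F₂} * I₂).radical
      = I₁.radical ⊓ I₂.radical ⊓ (Ideal.span {F₁, F₂}).radical := by
  apply le_antisymm
  · simpa only [Ideal.radical_inf] using
      Ideal.radical_mono (Ideal.span_singleton_mul_add_le_inf h1 h2)
  · simpa only [Ideal.radical_mul] using
      Ideal.radical_mono (Ideal.mul_mul_span_pair_le I₁ I₂ F₁ F₂)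

/-- Liaison addition, set-theoretic part: if `F₁ ∈ I₂` and `F₂ ∈ I₁`, then the
radical of `F₁I₁ + F₂I₂` is `√I₁ ∩ √I₂ ∩ √(F₁, F₂)`. -/
theorem liaison_addition_radical {R : Type*} [CommRing R] [IsNoetherianRing R]
    (I₁ I₂ : Ideal R) (F₁ F₂ : R) (h1 : F₁ ∈ I₂) (h2 : F₂ ∈ I₁) :
    (Ideal.span {F₁} * I₁ + Ideal.span {F₂} * I₂).radical
      = I₁.radical ⊓ I₂.radical ⊓ (Ideal.span {F₁, F₂}).radical :=
  liaison_addition_radical_general I₁ I₂ F₁ F₂ h1 h2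
end

section
/- Let $K$ be a field, $R = K[x_0, \dots, x_m]$ a standard graded polynomial ring, and let $I_1, I_2 \subseteq R$ be homogeneous ideals. Let $F_1, F_2 \in R$ be homogeneous forms of degrees $d_1, d_2$ forming a regular sequence on $R$, with $F_1 \in I_2$ and $F_2 \in I_1$. Set $I = F_1 I_1 + F_2 I_2$. Then for all $t$, $h_{R/I}(t) = h_{R/(F_1,F_2)}(t) + h_{R/I_1}(t - d_1) + h_{R/I_2}(t - d_2)$, where $h_M(t) = \dim_K M_t$ denotes the Hilbert function. -/
open MvPolynomial

variable {K : Type*} [Field K] {m : ℕ}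

/-- The Hilbert function `t ↦ dim_K (R/I)_t` of a quotient of a standard graded
polynomial ring `R = K[x₀, …, x_m]` by an ideal `I`, extended by `0` for `t < 0`. -/
noncomputable def hilbFn (I : Ideal (MvPolynomial (Fin (m + 1)) K)) (t : ℤ) : ℕ :=
  if t < 0 then 0 else
    Module.finrank K
      (↥(homogeneousSubmodule (Fin (m + 1)) K t.toNat) ⧸
        Submodule.comap (homogeneousSubmodule (Fin (m + 1)) K t.toNat).subtype
          (Submodule.restrictScalars K I))

/-!
For `I = F₁ I₁ + F₂ I₂` there is, in every degree `t`, an exact sequence of `K`-vector spaces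
`0 → R_{t-d₁-d₂} → (I₁)_{t-d₁} ⊕ (I₂)_{t-d₂} → I_t → 0`,
`c ↦ (-F₂ c, F₁ c)`, `(a, b) ↦ F₁ a + F₂ b`.
Surjectivity on the right uses that `I₁, I₂` are homogeneous; exactness in the middle uses that
`F₁, F₂` is a regular sequence (a syzygy `F₁ a + F₂ b = 0` forces `b ∈ (F₁)`) together with
`F₂ ∈ I₁` and `F₁ ∈ I₂`. Hence `dim I_t = dim (I₁)_{t-d₁} + dim (I₂)_{t-d₂} - dim R_{t-d₁-d₂}`.
The case `I₁ = I₂ = R` gives the same count for `(F₁, F₂)`, and subtracting the two yields the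
formula. It is convenient to grade `R` by `ℤ`, so that the shifted pieces `R_{t-d}` with `t < d`
are simply `0`.
-/

open DirectSum

section GradedAlgebra

variable {ι A : Type*} [CommRing A] [Algebra K A] (𝒜 : ι → Submodule K A)

def Ideal.degreePart (I : Ideal A) (t : ι) : Submodule K A := I.restrictScalars K ⊓ 𝒜 t

variable {𝒜}

theorem Ideal.mem_degreePart {I : Ideal A} {t : ι} {x : A} :
    x ∈ I.degreePart 𝒜 t ↔ x ∈ I ∧ x ∈ 𝒜 t :=
  Iff.rfl

@[simp]
theorem Ideal.degreePart_top (t : ι) : (⊤ : Ideal A).degreePart 𝒜 t = 𝒜 t := by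
  simp [Ideal.degreePart]

instance Ideal.finiteDimensional_degreePart [∀ i, FiniteDimensional K (𝒜 i)] (I : Ideal A)
    (t : ι) : FiniteDimensional K (I.degreePart 𝒜 t) :=
  Submodule.finiteDimensional_of_le inf_le_right

variable [AddCommGroup ι]

variable (𝒜) in
def liaisonMap (I₁ I₂ : Ideal A) (F₁ F₂ : A) (d₁ d₂ t : ι) :
    I₁.degreePart 𝒜 (t - d₁) × I₂.degreePart 𝒜 (t - d₂) →ₗ[K] A :=
  (LinearMap.mulLeft K F₁ ∘ₗ Submodule.subtype _).coprod
    (LinearMap.mulLeft K F₂ ∘ₗ Submodule.subtype _)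

variable {I₁ I₂ : Ideal A} {F₁ F₂ : A} {d₁ d₂ t : ι}

@[simp]
theorem liaisonMap_apply (x : I₁.degreePart 𝒜 (t - d₁) × I₂.degreePart 𝒜 (t - d₂)) :
    liaisonMap 𝒜 I₁ I₂ F₁ F₂ d₁ d₂ t x = F₁ * x.1 + F₂ * x.2 :=
  rfl

variable [DecidableEq ι] [GradedAlgebra 𝒜]

theorem SetLike.mul_mem_graded_of_add_eq {a b : A} {i j k : ι} (ha : a ∈ 𝒜 i) (hb : b ∈ 𝒜 j)
    (hk : i + j = k) : a * b ∈ 𝒜 k :=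
  hk ▸ SetLike.mul_mem_graded ha hb

theorem DirectSum.coe_decompose_mul_of_left_mem_sub {F : A} {d : ι} (hF : F ∈ 𝒜 d) (x : A)
    (t : ι) : (decompose 𝒜 (F * x) t : A) = F * decompose 𝒜 x (t - d) := by
  have := coe_decompose_mul_add_of_left_mem 𝒜 (b := x) (j := t - d) hF
  rwa [add_sub_cancel] at this

theorem range_liaisonMap (hI₁ : I₁.IsHomogeneous 𝒜) (hI₂ : I₂.IsHomogeneous 𝒜)
    (hF₁ : F₁ ∈ 𝒜 d₁) (hF₂ : F₂ ∈ 𝒜 d₂) :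
    LinearMap.range (liaisonMap 𝒜 I₁ I₂ F₁ F₂ d₁ d₂ t) =
      (Ideal.span {F₁} * I₁ + Ideal.span {F₂} * I₂).degreePart 𝒜 t := by
  apply le_antisymm
  · rintro _ ⟨⟨⟨a, ha, ha'⟩, ⟨b, hb, hb'⟩⟩, rfl⟩
    refine ⟨add_mem ?_ ?_, add_mem ?_ ?_⟩
    · exact Submodule.mem_sup_left (Ideal.mul_mem_mul (Ideal.mem_span_singleton_self F₁) ha)
    · exact Submodule.mem_sup_right (Ideal.mul_mem_mul (Ideal.mem_span_singleton_self F₂) hb)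
    · exact SetLike.mul_mem_graded_of_add_eq hF₁ ha' (add_sub_cancel d₁ t)
    · exact SetLike.mul_mem_graded_of_add_eq hF₂ hb' (add_sub_cancel d₂ t)
  · rintro f ⟨hfI, hft⟩
    obtain ⟨_, hg, _, hh, rfl⟩ := Submodule.mem_sup.mp hfI
    obtain ⟨a, ha, rfl⟩ := Ideal.mem_span_singleton_mul.mp hg
    obtain ⟨b, hb, rfl⟩ := Ideal.mem_span_singleton_mul.mp hh
    refine ⟨⟨⟨_, (hI₁.mem_iff 𝒜).mp ha (t - d₁), Submodule.coe_mem _⟩,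
      ⟨_, (hI₂.mem_iff 𝒜).mp hb (t - d₂), Submodule.coe_mem _⟩⟩, ?_⟩
    rw [liaisonMap_apply, ← coe_decompose_mul_of_left_mem_sub hF₁,
      ← coe_decompose_mul_of_left_mem_sub hF₂, ← Submodule.coe_add, ← DirectSum.add_apply,
      ← decompose_add, decompose_of_mem_same 𝒜 hft]

theorem finrank_ker_liaisonMap [∀ i, FiniteDimensional K (𝒜 i)]
    (hF₁ : F₁ ∈ 𝒜 d₁) (hF₂ : F₂ ∈ 𝒜 d₂) (hreg₁ : ∀ g, F₁ * g = 0 → g = 0)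
    (hreg₂ : ∀ g, F₂ * g ∈ Ideal.span {F₁} → g ∈ Ideal.span {F₁})
    (h1 : F₁ ∈ I₂) (h2 : F₂ ∈ I₁) :
    Module.finrank K (LinearMap.ker (liaisonMap 𝒜 I₁ I₂ F₁ F₂ d₁ d₂ t)) =
      Module.finrank K (𝒜 (t - d₁ - d₂)) := by
  let ψ : 𝒜 (t - d₁ - d₂) →ₗ[K] I₁.degreePart 𝒜 (t - d₁) × I₂.degreePart 𝒜 (t - d₂) :=
    ((LinearMap.mulLeft K (-F₂) ∘ₗ Submodule.subtype _).codRestrict _ fun c =>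
        Ideal.mem_degreePart.mpr ⟨I₁.mul_mem_right _ (I₁.neg_mem_iff.mpr h2),
          SetLike.mul_mem_graded_of_add_eq (neg_mem hF₂) c.2 (by abel)⟩).prod
      ((LinearMap.mulLeft K F₁ ∘ₗ Submodule.subtype _).codRestrict _ fun c =>
        Ideal.mem_degreePart.mpr
          ⟨I₂.mul_mem_right _ h1, SetLike.mul_mem_graded_of_add_eq hF₁ c.2 (by abel)⟩)
  have hψ₁ (c : 𝒜 (t - d₁ - d₂)) : ((ψ c).1 : A) = -F₂ * c := rfl
  have hψ₂ (c : 𝒜 (t - d₁ - d₂)) : ((ψ c).2 : A) = F₁ * c := rfl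
  have hψ : Function.Injective ψ := by
    refine (injective_iff_map_eq_zero ψ).mpr fun c hc => Subtype.ext (hreg₁ c ?_)
    rw [← hψ₂, hc, Prod.snd_zero, Submodule.coe_zero]
  have hrange : LinearMap.range ψ = LinearMap.ker (liaisonMap 𝒜 I₁ I₂ F₁ F₂ d₁ d₂ t) := by
    apply le_antisymm
    · rintro _ ⟨c, rfl⟩
      rw [LinearMap.mem_ker, liaisonMap_apply, hψ₁, hψ₂]
      ring
    · rintro ⟨⟨a, ha, ha'⟩, ⟨b, hb, hb'⟩⟩ hab
      rw [LinearMap.mem_ker, liaisonMap_apply] at hab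
      have hbF₁ : b ∈ Ideal.span {F₁} :=
        hreg₂ b (Ideal.mem_span_singleton'.mpr ⟨-a, by linear_combination -hab⟩)
      obtain ⟨c, rfl⟩ := Ideal.mem_span_singleton.mp hbF₁
      have hb_eq : F₁ * c = F₁ * decompose 𝒜 c (t - d₁ - d₂) := by
        rw [sub_right_comm, ← coe_decompose_mul_of_left_mem_sub hF₁,
          decompose_of_mem_same 𝒜 hb']
      refine ⟨decompose 𝒜 c (t - d₁ - d₂), Prod.ext (Subtype.ext ?_) (Subtype.ext ?_)⟩
      · refine sub_eq_zero.mp (hreg₁ _ ?_)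
        rw [hψ₁]
        linear_combination -hab + F₂ * hb_eq
      · rw [hψ₂]
        exact hb_eq.symm
  rw [← hrange, LinearMap.finrank_range_of_inj hψ]

theorem finrank_degreePart_liaisonAddition [∀ i, FiniteDimensional K (𝒜 i)]
    (hI₁ : I₁.IsHomogeneous 𝒜) (hI₂ : I₂.IsHomogeneous 𝒜)
    (hF₁ : F₁ ∈ 𝒜 d₁) (hF₂ : F₂ ∈ 𝒜 d₂) (hreg₁ : ∀ g, F₁ * g = 0 → g = 0)
    (hreg₂ : ∀ g, F₂ * g ∈ Ideal.span {F₁} → g ∈ Ideal.span {F₁})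
    (h1 : F₁ ∈ I₂) (h2 : F₂ ∈ I₁) (t : ι) :
    Module.finrank K ((Ideal.span {F₁} * I₁ + Ideal.span {F₂} * I₂).degreePart 𝒜 t) +
        Module.finrank K (𝒜 (t - d₁ - d₂)) =
      Module.finrank K (I₁.degreePart 𝒜 (t - d₁)) +
        Module.finrank K (I₂.degreePart 𝒜 (t - d₂)) := by
  rw [← range_liaisonMap hI₁ hI₂ hF₁ hF₂, ← finrank_ker_liaisonMap hF₁ hF₂ hreg₁ hreg₂ h1 h2,
    LinearMap.finrank_range_add_finrank_ker, Module.finrank_prod]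

end GradedAlgebra

attribute [local instance] weightedGradedAlgebra

namespace MvPolynomial

variable {σ R : Type*} [CommRing R]

theorem _root_.Finsupp.weight_one_int (d : σ →₀ ℕ) : Finsupp.weight (1 : σ → ℤ) d = d.degree := by
  simp [Finsupp.weight_apply, Finsupp.degree_apply, Finsupp.sum]

theorem weightedHomogeneousComponent_one_int_natCast (n : ℕ) (φ : MvPolynomial σ R) :
    weightedHomogeneousComponent (1 : σ → ℤ) n φ = homogeneousComponent n φ := by
  ext d
  simp [coeff_weightedHomogeneousComponent, coeff_homogeneousComponent, Finsupp.weight_one_int]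

theorem weightedHomogeneousComponent_one_int_of_neg {t : ℤ} (ht : t < 0) (φ : MvPolynomial σ R) :
    weightedHomogeneousComponent (1 : σ → ℤ) t φ = 0 :=
  weightedHomogeneousComponent_eq_zero' _ _ fun d _ => by rw [Finsupp.weight_one_int]; omega

theorem weightedHomogeneousSubmodule_one_int_natCast (n : ℕ) :
    weightedHomogeneousSubmodule R (1 : σ → ℤ) n = homogeneousSubmodule σ R n := by
  ext φ
  simp only [mem_weightedHomogeneousSubmodule, mem_homogeneousSubmodule, IsHomogeneous,
    IsWeightedHomogeneous, Finsupp.weight_one_int, Finsupp.degree_eq_weight_one, Nat.cast_inj]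
  rfl

theorem weightedHomogeneousSubmodule_one_int_of_neg {t : ℤ} (ht : t < 0) :
    weightedHomogeneousSubmodule R (1 : σ → ℤ) t = ⊥ := by
  refine (Submodule.eq_bot_iff _).mpr fun φ hφ => ?_
  rw [← weightedHomogeneousComponent_eq_self hφ, weightedHomogeneousComponent_one_int_of_neg ht]

theorem IsHomogeneous.mem_weightedHomogeneousSubmodule_one_int {φ : MvPolynomial σ R} {n : ℕ}
    (hφ : φ.IsHomogeneous n) : φ ∈ weightedHomogeneousSubmodule R (1 : σ → ℤ) n := by
  rwa [weightedHomogeneousSubmodule_one_int_natCast, mem_homogeneousSubmodule]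

instance [Finite σ] (n : ℕ) : FiniteDimensional K (homogeneousSubmodule σ K n) :=
  Module.Finite.iff_fg.mpr (homogeneousSubmodule_fg σ K n)

instance [Finite σ] (t : ℤ) :
    FiniteDimensional K (weightedHomogeneousSubmodule K (1 : σ → ℤ) t) := by
  obtain ht | ht := lt_or_ge t 0
  · rw [weightedHomogeneousSubmodule_one_int_of_neg ht]
    infer_instance
  · lift t to ℕ using ht
    rw [weightedHomogeneousSubmodule_one_int_natCast]
    infer_instance

theorem isHomogeneous_one_int_of_homogeneousComponent_mem {I : Ideal (MvPolynomial σ R)}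
    (hI : ∀ f ∈ I, ∀ n : ℕ, homogeneousComponent n f ∈ I) :
    I.IsHomogeneous (weightedHomogeneousSubmodule R (1 : σ → ℤ)) := by
  intro t f hf
  show ((weightedDecomposition R (1 : σ → ℤ)).decompose' f t : MvPolynomial σ R) ∈ I
  rw [weightedDecomposition.decompose'_apply]
  obtain ht | ht := lt_or_ge t 0
  · rw [weightedHomogeneousComponent_one_int_of_neg ht]
    exact I.zero_mem
  · lift t to ℕ using ht
    rw [weightedHomogeneousComponent_one_int_natCast]
    exact hI f hf t

end MvPolynomial

theorem hilbFn_add_finrank_degreePart (I : Ideal (MvPolynomial (Fin (m + 1)) K)) (t : ℤ) :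
    hilbFn I t +
        Module.finrank K (I.degreePart (weightedHomogeneousSubmodule K (1 : Fin (m + 1) → ℤ)) t) =
      Module.finrank K (weightedHomogeneousSubmodule K (1 : Fin (m + 1) → ℤ) t) := by
  obtain ht | ht := lt_or_ge t 0
  · rw [hilbFn, if_pos ht, Ideal.degreePart, weightedHomogeneousSubmodule_one_int_of_neg ht,
      inf_bot_eq, zero_add]
  lift t to ℕ using ht
  rw [hilbFn, if_neg (Int.natCast_nonneg t).not_gt, Int.toNat_natCast, Ideal.degreePart,
    weightedHomogeneousSubmodule_one_int_natCast]
  set S := homogeneousSubmodule (Fin (m + 1)) K t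
  set X := Submodule.restrictScalars K I
  have hcomap : Submodule.comap S.subtype X = Submodule.comap S.subtype (X ⊓ S) := by
    rw [Submodule.comap_inf, Submodule.comap_subtype_self, inf_top_eq]
  rw [← (Submodule.comapSubtypeEquivOfLe (inf_le_right : X ⊓ S ≤ S)).finrank_eq, ← hcomap]
  exact Submodule.finrank_quotient_add_finrank _

/-- The Hilbert function formula for liaison addition (Schwartau, Geramita–Migliore):
`h_{R/(F₁I₁+F₂I₂)}(t) = h_{R/(F₁,F₂)}(t) + h_{R/I₁}(t-d₁) + h_{R/I₂}(t-d₂)`. -/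
theorem hilbFn_liaison_addition
    (I₁ I₂ : Ideal (MvPolynomial (Fin (m + 1)) K))
    (hI₁hom : ∀ f ∈ I₁, ∀ n : ℕ, homogeneousComponent n f ∈ I₁)
    (hI₂hom : ∀ f ∈ I₂, ∀ n : ℕ, homogeneousComponent n f ∈ I₂)
    {F₁ F₂ : MvPolynomial (Fin (m + 1)) K} {d₁ d₂ : ℕ}
    (hF₁hom : F₁.IsHomogeneous d₁) (hF₂hom : F₂.IsHomogeneous d₂)
    (hreg₁ : ∀ g, F₁ * g = 0 → g = 0)
    (hreg₂ : ∀ g, F₂ * g ∈ Ideal.span {F₁} → g ∈ Ideal.span {F₁})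
    (h1 : F₁ ∈ I₂) (h2 : F₂ ∈ I₁) (t : ℤ) :
    hilbFn (Ideal.span {F₁} * I₁ + Ideal.span {F₂} * I₂) t
      = hilbFn (Ideal.span {F₁, F₂}) t + hilbFn I₁ (t - d₁) + hilbFn I₂ (t - d₂) := by
  have hF₁ := hF₁hom.mem_weightedHomogeneousSubmodule_one_int
  have hF₂ := hF₂hom.mem_weightedHomogeneousSubmodule_one_int
  have hI₁ := isHomogeneous_one_int_of_homogeneousComponent_mem hI₁hom
  have hI₂ := isHomogeneous_one_int_of_homogeneousComponent_mem hI₂hom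
  have count := finrank_degreePart_liaisonAddition hI₁ hI₂ hF₁ hF₂ hreg₁ hreg₂ h1 h2 t
  have hTop := Ideal.IsHomogeneous.top (weightedHomogeneousSubmodule K (1 : Fin (m + 1) → ℤ))
  have countTop := finrank_degreePart_liaisonAddition hTop hTop hF₁ hF₂ hreg₁ hreg₂
    Submodule.mem_top Submodule.mem_top t
  rw [Ideal.mul_top, Ideal.mul_top, Submodule.add_eq_sup, ← Ideal.span_insert,
    Ideal.degreePart_top, Ideal.degreePart_top] at countTop
  have hilb := hilbFn_add_finrank_degreePart (Ideal.span {F₁} * I₁ + Ideal.span {F₂} * I₂) t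
  have hilbTop := hilbFn_add_finrank_degreePart (Ideal.span {F₁, F₂}) t
  have hilb₁ := hilbFn_add_finrank_degreePart I₁ (t - d₁)
  have hilb₂ := hilbFn_add_finrank_degreePart I₂ (t - d₂)
  omega
end
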